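/- Let G = {(A_t, u(e₁+e₂) + v e₃) | t, u, v ∈ ℝ} act on ℝ³ by (A,a)·x = Ax + a. For a point p = (x₀, y₀, z₀) with x₀ ≠ y₀, the orbit of p is the open half-space {(a,b,c) ∈ ℝ³ | (a-b)(x₀-y₀) > 0}. In particular there are exactly two open orbits. -/

import Mathlib

/-!
The difference of the first two coordinates is multiplied by `cosh t - sinh t = exp (-t)`
and is otherwise unaffected by the translations, so its sign is invariant. Conversely,
`exp (-t)` takes every positive value, and the translations `u (e₁ + e₂) + v e₃` then adjust
the remaining two degrees of freedom, so the action is transitive on each half-space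
`{q | q 1 < q 0}`, `{q | q 0 < q 1}`.
-/

/-- A_t = (cosh t)(E₁₁+E₂₂) + (sinh t)(E₁₂+E₂₁) + E₃₃ -/
noncomputable def At (t : ℝ) : Matrix (Fin 3) (Fin 3) ℝ :=
  !![Real.cosh t, Real.sinh t, 0; Real.sinh t, Real.cosh t, 0; 0, 0, 1]

/-- The action of the element with parameters (t,u,v) of
G = {(A_t, u(e₁+e₂)+v e₃)} on x ∈ ℝ³. -/
noncomputable def act (t u v : ℝ) (x : Fin 3 → ℝ) : Fin 3 → ℝ :=
  (At t).mulVec x + u • ![1, 1, 0] + v • ![0, 0, 1]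

/-- The orbit of p with p₀ ≠ p₁ under G = {(A_t, u(e₁+e₂)+v e₃)}. -/
noncomputable def orbit (p : Fin 3 → ℝ) : Set (Fin 3 → ℝ) :=
  {q | ∃ t u v : ℝ, q = act t u v p}

section Action

variable (t u v : ℝ) (p : Fin 3 → ℝ)

lemma act_apply_zero : act t u v p 0 = Real.cosh t * p 0 + Real.sinh t * p 1 + u := by
  simp [act, At, dotProduct, Fin.sum_univ_three]

lemma act_apply_one : act t u v p 1 = Real.sinh t * p 0 + Real.cosh t * p 1 + u := by
  simp [act, At, dotProduct, Fin.sum_univ_three]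

lemma act_apply_two : act t u v p 2 = p 2 + v := by
  simp [act, At, dotProduct, Fin.sum_univ_three]

lemma act_apply_zero_sub_apply_one :
    act t u v p 0 - act t u v p 1 = Real.exp (-t) * (p 0 - p 1) := by
  rw [act_apply_zero, act_apply_one, ← Real.cosh_sub_sinh]
  ring

end Action

lemma act_eq_of_exp_neg_mul_sub {t : ℝ} {p q : Fin 3 → ℝ}
    (ht : Real.exp (-t) * (p 0 - p 1) = q 0 - q 1) :
    act t (q 0 - Real.cosh t * p 0 - Real.sinh t * p 1) (q 2 - p 2) p = q := by
  funext i
  fin_cases i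
  · simp only [Fin.zero_eta, act_apply_zero]
    ring
  · simp only [Fin.mk_one, act_apply_one]
    rw [← Real.cosh_sub_sinh] at ht
    linear_combination -ht
  · simp only [Fin.reduceFinMk, act_apply_two]
    ring

lemma orbit_eq_setOf_mul_pos {p : Fin 3 → ℝ} (hp : p 0 ≠ p 1) :
    orbit p = {q | (q 0 - q 1) * (p 0 - p 1) > 0} := by
  have hd : p 0 - p 1 ≠ 0 := sub_ne_zero.2 hp
  ext q
  constructor
  · rintro ⟨t, u, v, rfl⟩
    rw [Set.mem_ofPred_eq, act_apply_zero_sub_apply_one, mul_assoc]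
    exact mul_pos (Real.exp_pos _) (mul_self_pos.2 hd)
  · intro hq
    set r := (q 0 - q 1) / (p 0 - p 1)
    have hr : 0 < r := div_pos_iff.2 (mul_pos_iff.1 hq)
    have ht : Real.exp (-(-Real.log r)) * (p 0 - p 1) = q 0 - q 1 := by
      rw [neg_neg, Real.exp_log hr, div_mul_cancel₀ _ hd]
    exact ⟨_, _, _, (act_eq_of_exp_neg_mul_sub ht).symm⟩

lemma orbit_eq_of_lt {p : Fin 3 → ℝ} (hp : p 1 < p 0) : orbit p = {q | q 1 < q 0} := by
  rw [orbit_eq_setOf_mul_pos hp.ne']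
  ext q
  simp only [Set.mem_ofPred_eq, gt_iff_lt, mul_pos_iff_of_pos_right (sub_pos.2 hp), sub_pos]

lemma orbit_eq_of_gt {p : Fin 3 → ℝ} (hp : p 0 < p 1) : orbit p = {q | q 0 < q 1} := by
  rw [orbit_eq_setOf_mul_pos hp.ne]
  ext q
  rw [Set.mem_ofPred_eq, Set.mem_ofPred_eq, gt_iff_lt, ← neg_mul_neg, neg_sub, neg_sub,
    mul_pos_iff_of_pos_right (sub_pos.2 hp), sub_pos]

/-- For p = (x₀,y₀,z₀) with x₀ ≠ y₀ the orbit is the open half-space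
{(a,b,c) | (a-b)(x₀-y₀) > 0}; in particular there are exactly two such (open) orbits. -/
theorem orbit_case_iii_open (x₀ y₀ z₀ : ℝ) (h : x₀ ≠ y₀) :
    orbit ![x₀, y₀, z₀] = {q : Fin 3 → ℝ | (q 0 - q 1) * (x₀ - y₀) > 0} ∧
    ∃ O₁ O₂ : Set (Fin 3 → ℝ), O₁ ≠ O₂ ∧ IsOpen O₁ ∧ IsOpen O₂ ∧
      ∀ p : Fin 3 → ℝ, p 0 ≠ p 1 → orbit p = O₁ ∨ orbit p = O₂ := by
  refine ⟨orbit_eq_setOf_mul_pos h, {q | q 1 < q 0}, {q | q 0 < q 1}, ?_,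
    isOpen_lt (continuous_apply 1) (continuous_apply 0),
    isOpen_lt (continuous_apply 0) (continuous_apply 1), ?_⟩
  · intro heq
    have hmem : (![1, 0, 0] : Fin 3 → ℝ) ∈ {q : Fin 3 → ℝ | q 1 < q 0} := by norm_num
    rw [heq] at hmem
    norm_num at hmem
  · intro p hp
    rcases hp.lt_or_gt with hlt | hgt
    · exact Or.inr (orbit_eq_of_gt hlt)
    · exact Or.inl (orbit_eq_of_lt hgt)
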